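/- For fixed θ > 0, if k = k(N) satisfies k/N → 1/e^{1/θ} as N → ∞ (the asymptotically optimal number of rejections in the Ewens model), then the success probability W(N,k)/[θ(θ+1)···(θ+N−1)] converges to 1/e as N → ∞, independent of θ. -/

import Mathlib

/-- Number of left-to-right maxima of the permutation `π` (one-line notation
`i ↦ π i`): positions `j` such that `π i < π j` for all `i < j`. -/
def lrmaxCount {N : ℕ} (π : Equiv.Perm (Fin N)) : ℕ :=
  (Finset.univ.filter (fun j : Fin N => ∀ i, i < j → π i < π j)).card

/-- Number of inversions of `π`: pairs of positions `i < j` with `π i > π j`. -/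
def invCount {N : ℕ} (π : Equiv.Perm (Fin N)) : ℕ :=
  (Finset.univ.filter (fun p : Fin N × Fin N => p.1 < p.2 ∧ π p.2 < π p.1)).card

/-- Position `j` is a left-to-right maximum of `π`. -/
def IsLRMax {N : ℕ} (π : Equiv.Perm (Fin N)) (j : Fin N) : Prop :=
  ∀ i, i < j → π i < π j

/-- `π` is `k`-winnable: the positional strategy that rejects the first `k`
candidates (positions `0,…,k-1`) and accepts the next left-to-right maximum
thereafter selects the position of the maximal value. -/
def KWinnable {N : ℕ} (k : ℕ) (π : Equiv.Perm (Fin N)) : Prop :=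
  ∃ j : Fin N, k ≤ (j : ℕ) ∧ IsLRMax π j ∧ (∀ i, π i ≤ π j) ∧
    ∀ i : Fin N, k ≤ (i : ℕ) → i < j → ¬ IsLRMax π i

open Classical in
/-- Ewens-weighted count of `k`-winnable permutations:
`W(N,k) = Σ_{k-winnable π ∈ S_N} θ^{lrmax(π)}`. -/
noncomputable def W (R : Type*) [CommRing R] (N k : ℕ) (θ : R) : R :=
  ∑ π ∈ Finset.univ.filter (fun π : Equiv.Perm (Fin N) => KWinnable k π),
    θ ^ lrmaxCount π

/-!
A permutation is `k`-winnable exactly when it has a single left-to-right maximum at a position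
`≥ k`: the overall maximum is always a left-to-right maximum, and no later one exists.
Appending a last value `v` to a permutation of `Fin n`, keeping the relative order of the first
`n` values, creates a new left-to-right maximum precisely when `v` is the largest value. So the
Ewens weight `w₁(n)` of permutations with one left-to-right maximum at a position `≥ k` and the
weight `w₀(n)` of those with none satisfy `w₁(n+1) = n w₁(n) + θ w₀(n)`, `w₀(n+1) = n w₀(n)`, whence
`W(N,k) = θ (θ)ₖ ((N-1)!/(k-1)!) ∑_{k ≤ j < N} 1/j`.

After dividing by `(θ)_N`, the harmonic sum tends to `-log (k/N) → 1/θ` because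
`H_n - log n → γ`, and the remaining factor `((N-1)!/(θ)_N) / ((k-1)!/(θ)ₖ)` tends to
`(k/N)^θ → e⁻¹` by Euler's limit `n^θ n!/(θ)_{n+1} → Γ(θ)`.
-/

open Finset Filter Topology

section Records

variable {n : ℕ}

/-- The permutation of `Fin (n + 1)` whose last value is `v` and whose first `n` values are in
the relative order given by `σ`. -/
def permSnoc (v : Fin (n + 1)) (σ : Equiv.Perm (Fin n)) : Equiv.Perm (Fin (n + 1)) :=
  (finSuccEquiv' (Fin.last n)).trans ((Equiv.optionCongr σ).trans (finSuccEquiv' v).symm)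

@[simp] lemma permSnoc_castSucc (v : Fin (n + 1)) (σ : Equiv.Perm (Fin n)) (i : Fin n) :
    permSnoc v σ i.castSucc = v.succAbove (σ i) := by
  simp [permSnoc, finSuccEquiv'_last_apply_castSucc, finSuccEquiv'_symm_some]

@[simp] lemma permSnoc_last (v : Fin (n + 1)) (σ : Equiv.Perm (Fin n)) :
    permSnoc v σ (Fin.last n) = v := by
  simp [permSnoc, finSuccEquiv'_at]

lemma permSnoc_bijective :
    Function.Bijective (fun p : Fin (n + 1) × Equiv.Perm (Fin n) => permSnoc p.1 p.2) := by
  rw [Fintype.bijective_iff_injective_and_card]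
  refine ⟨fun ⟨v, σ⟩ ⟨v', σ'⟩ h => ?_, by simp [Fintype.card_perm, Nat.factorial_succ]⟩
  obtain rfl : v = v' := by simpa using congrArg (· (Fin.last n)) h
  refine Prod.ext rfl (Equiv.ext fun i => (Fin.succAbove_right_injective (p := v)) ?_)
  simpa using congrArg (· i.castSucc) h

lemma sum_perm_succ_eq_sum_permSnoc {M : Type*} [AddCommMonoid M]
    (f : Equiv.Perm (Fin (n + 1)) → M) :
    ∑ π, f π = ∑ v, ∑ σ, f (permSnoc v σ) := by
  rw [← Fintype.sum_prod_type']
  exact (Fintype.sum_bijective _ permSnoc_bijective _ _ fun _ => rfl).symm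

lemma isLRMax_permSnoc_castSucc (v : Fin (n + 1)) (σ : Equiv.Perm (Fin n)) (i : Fin n) :
    IsLRMax (permSnoc v σ) i.castSucc ↔ IsLRMax σ i := by
  refine ⟨fun h i' hi' => ?_, fun h i'' hi'' => ?_⟩
  · simpa [Fin.succAbove_lt_succAbove_iff] using h i'.castSucc (by simpa using hi')
  · obtain ⟨i', rfl⟩ := Fin.exists_castSucc_eq.2 (Fin.ne_last_of_lt (hi''.trans_le (Fin.le_last _)))
    simpa [Fin.succAbove_lt_succAbove_iff] using h i' (by simpa using hi'')

lemma isLRMax_permSnoc_last (v : Fin (n + 1)) (σ : Equiv.Perm (Fin n)) :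
    IsLRMax (permSnoc v σ) (Fin.last n) ↔ v = Fin.last n := by
  refine ⟨fun h => ?_, ?_⟩
  · by_contra hv
    obtain ⟨t, ht⟩ := Fin.exists_succAbove_eq (Ne.symm hv)
    have := h (σ.symm t).castSucc (Fin.castSucc_lt_last _)
    rw [permSnoc_castSucc, Equiv.apply_symm_apply, ht, permSnoc_last] at this
    exact (Fin.le_last v).not_gt this
  · rintro rfl i hi
    obtain ⟨i', rfl⟩ := Fin.exists_castSucc_eq.2 (Fin.ne_last_of_lt hi)
    simp [Fin.castSucc_lt_last]

open Classical in
noncomputable def lrmaxCountFrom (k : ℕ) (π : Equiv.Perm (Fin n)) : ℕ :=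
  #{j : Fin n | k ≤ (j : ℕ) ∧ IsLRMax π j}

lemma lrmaxCountFrom_zero (π : Equiv.Perm (Fin n)) : lrmaxCountFrom 0 π = lrmaxCount π := by
  simp only [lrmaxCountFrom, lrmaxCount, IsLRMax, zero_le, true_and]

lemma lrmaxCountFrom_self (π : Equiv.Perm (Fin n)) : lrmaxCountFrom n π = 0 := by
  simp [lrmaxCountFrom, Fin.is_lt]

lemma lrmaxCountFrom_permSnoc {k : ℕ} (hk : k ≤ n) (v : Fin (n + 1)) (σ : Equiv.Perm (Fin n)) :
    lrmaxCountFrom k (permSnoc v σ) = lrmaxCountFrom k σ + if v = Fin.last n then 1 else 0 := by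
  rw [lrmaxCountFrom, lrmaxCountFrom, card_filter, card_filter, Fin.sum_univ_castSucc]
  simp only [Fin.val_castSucc, Fin.val_last, hk, isLRMax_permSnoc_last, true_and]
  congr 1
  exact sum_congr rfl fun i _ => by rw [isLRMax_permSnoc_castSucc]

lemma lrmaxCount_permSnoc (v : Fin (n + 1)) (σ : Equiv.Perm (Fin n)) :
    lrmaxCount (permSnoc v σ) = lrmaxCount σ + if v = Fin.last n then 1 else 0 := by
  simpa only [lrmaxCountFrom_zero] using lrmaxCountFrom_permSnoc (Nat.zero_le n) v σ

lemma sum_perm_succ_lrmax {M : Type*} [AddCommMonoid M] {k : ℕ} (hk : k ≤ n)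
    (f : ℕ → ℕ → M) :
    ∑ π : Equiv.Perm (Fin (n + 1)), f (lrmaxCountFrom k π) (lrmaxCount π) =
      n • ∑ σ : Equiv.Perm (Fin n), f (lrmaxCountFrom k σ) (lrmaxCount σ) +
        ∑ σ : Equiv.Perm (Fin n), f (lrmaxCountFrom k σ + 1) (lrmaxCount σ + 1) := by
  rw [sum_perm_succ_eq_sum_permSnoc, Fin.sum_univ_castSucc]
  simp [lrmaxCountFrom_permSnoc hk, lrmaxCount_permSnoc, Fin.castSucc_ne_last]

end Records

section Weights

variable {R : Type*} [CommSemiring R] (θ : R)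

theorem sum_pow_lrmaxCount (n : ℕ) :
    ∑ π : Equiv.Perm (Fin n), θ ^ lrmaxCount π = ∏ i ∈ range n, (θ + i) := by
  induction n with
  | zero => simp [lrmaxCount]
  | succ n ih =>
    have := sum_perm_succ_lrmax (Nat.zero_le n) fun _ c => θ ^ c
    simp only [pow_succ, ← sum_mul, ih] at this
    rw [this, prod_range_succ, nsmul_eq_mul]
    ring

noncomputable def lrmaxFromWeight (n k m : ℕ) : R :=
  ∑ π : Equiv.Perm (Fin n), if lrmaxCountFrom k π = m then θ ^ lrmaxCount π else 0

variable {θ}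

lemma lrmaxFromWeight_succ_zero {n k : ℕ} (hk : k ≤ n) :
    lrmaxFromWeight θ (n + 1) k 0 = n * lrmaxFromWeight θ n k 0 := by
  have := sum_perm_succ_lrmax hk fun c e => if c = 0 then θ ^ e else 0
  simpa [lrmaxFromWeight, nsmul_eq_mul] using this

lemma lrmaxFromWeight_succ_succ {n k : ℕ} (hk : k ≤ n) (m : ℕ) :
    lrmaxFromWeight θ (n + 1) k (m + 1) =
      n * lrmaxFromWeight θ n k (m + 1) + θ * lrmaxFromWeight θ n k m := by
  have := sum_perm_succ_lrmax hk fun c e => if c = m + 1 then θ ^ e else 0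
  simp only [Nat.add_right_cancel_iff, pow_succ, ← ite_zero_mul, ← sum_mul] at this
  rw [lrmaxFromWeight, this, nsmul_eq_mul, mul_comm θ]
  rfl

lemma lrmaxFromWeight_self_zero (k : ℕ) :
    lrmaxFromWeight θ k k 0 = ∏ i ∈ range k, (θ + i) := by
  simp [lrmaxFromWeight, lrmaxCountFrom_self, sum_pow_lrmaxCount]

lemma lrmaxFromWeight_self_succ (k m : ℕ) : lrmaxFromWeight θ k k (m + 1) = 0 := by
  simp [lrmaxFromWeight, lrmaxCountFrom_self]

lemma lrmaxFromWeight_zero_eq {k n : ℕ} (hk : k ≤ n) :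
    lrmaxFromWeight θ n k 0 = (∏ i ∈ range k, (θ + i)) * ∏ i ∈ Ico k n, (i : R) := by
  induction n, hk using Nat.le_induction with
  | base => simp [lrmaxFromWeight_self_zero]
  | succ n hk ih => rw [lrmaxFromWeight_succ_zero hk, ih, prod_Ico_succ_top hk]; ring

lemma lrmaxFromWeight_one_eq {K : Type*} [Field K] [CharZero K] {θ : K} {k n : ℕ} (hk1 : 1 ≤ k)
    (hk : k ≤ n) :
    lrmaxFromWeight θ n k 1 =
      θ * (∏ i ∈ range k, (θ + i)) * (∏ i ∈ Ico k n, (i : K)) * ∑ j ∈ Ico k n, (j : K)⁻¹ := by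
  induction n, hk using Nat.le_induction with
  | base => simp [lrmaxFromWeight_self_succ]
  | succ n hk ih =>
    have hn : (n : K) ≠ 0 := Nat.cast_ne_zero.2 (by omega)
    rw [lrmaxFromWeight_succ_succ hk, ih, lrmaxFromWeight_zero_eq hk, prod_Ico_succ_top hk,
      sum_Ico_succ_top hk]
    field_simp

end Weights

section Winnable

variable {n : ℕ}

lemma isLRMax_of_forall_le {π : Equiv.Perm (Fin n)} {j : Fin n} (h : ∀ i, π i ≤ π j) :
    IsLRMax π j :=
  fun i hi => (h i).lt_of_ne (π.injective.ne hi.ne)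

lemma kWinnable_iff_lrmaxCountFrom_eq_one {k : ℕ} (π : Equiv.Perm (Fin n)) :
    KWinnable k π ↔ lrmaxCountFrom k π = 1 := by
  simp only [lrmaxCountFrom, card_eq_one, eq_singleton_iff_unique_mem, mem_filter, mem_univ,
    true_and]
  constructor
  · rintro ⟨j, hkj, hj, hmax, hfirst⟩
    refine ⟨j, ⟨hkj, hj⟩, fun i ⟨hki, hi⟩ => ?_⟩
    rcases lt_trichotomy i j with hij | rfl | hji
    · exact absurd hi (hfirst i hki hij)
    · rfl
    · exact absurd (hi j hji) (hmax i).not_gt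
  · rintro ⟨j, ⟨hkj, hj⟩, huniq⟩
    have : Nonempty (Fin n) := ⟨j⟩
    obtain ⟨m, hm⟩ := Finite.exists_max π
    obtain rfl : m = j := by
      by_cases hkm : k ≤ (m : ℕ)
      · exact huniq m ⟨hkm, isLRMax_of_forall_le hm⟩
      · exact absurd (hj m (Fin.lt_def.2 (by omega))) (hm j).not_gt
    exact ⟨m, hkj, hj, hm, fun i hki him hi => him.ne (huniq i ⟨hki, hi⟩)⟩

theorem W_eq_lrmaxFromWeight (R : Type*) [CommRing R] (N k : ℕ) (θ : R) :
    W R N k θ = lrmaxFromWeight θ N k 1 := by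
  classical
  rw [W, lrmaxFromWeight, sum_filter]
  simp only [kWinnable_iff_lrmaxCountFrom_eq_one]

theorem W_eq_mul_sum_inv {K : Type*} [Field K] [CharZero K] (θ : K) {N k : ℕ} (hk1 : 1 ≤ k)
    (hkN : k ≤ N) :
    W K N k θ =
      θ * (∏ i ∈ range k, (θ + i)) * (∏ i ∈ Ico k N, (i : K)) * ∑ j ∈ Ico k N, (j : K)⁻¹ := by
  rw [W_eq_lrmaxFromWeight, lrmaxFromWeight_one_eq hk1 hkN]

end Winnable

section Asymptotics

open Real

variable {ι : Type*} {l : Filter ι} {a b : ι → ℕ} {c : ℝ}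

lemma tendsto_atTop_of_tendsto_div (hab : Tendsto (fun x => (a x : ℝ) / b x) l (𝓝 c))
    (hc : 0 < c) (hb : Tendsto b l atTop) : Tendsto a l atTop := by
  refine tendsto_natCast_atTop_iff.1 ((hab.pos_mul_atTop hc
    (tendsto_natCast_atTop_atTop.comp hb)).congr' ?_)
  filter_upwards [hb.eventually_gt_atTop 0] with x hx
  simp [hx.ne']

lemma tendsto_comp_sub_comp_of_tendsto_sub_log {u : ℕ → ℝ} {L : ℝ}
    (hu : Tendsto (fun n => u n - log n) atTop (𝓝 L)) (ha : Tendsto a l atTop)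
    (hb : Tendsto b l atTop) (hab : Tendsto (fun x => (a x : ℝ) / b x) l (𝓝 c)) (hc : c ≠ 0) :
    Tendsto (fun x => u (b x) - u (a x)) l (𝓝 (-log c)) := by
  have key := ((hu.comp hb).sub (hu.comp ha)).sub ((continuousAt_log hc).tendsto.comp hab)
  rw [sub_self, zero_sub] at key
  refine key.congr' ?_
  filter_upwards [ha.eventually_gt_atTop 0, hb.eventually_gt_atTop 0] with x hax hbx
  simp only [Function.comp_apply]
  rw [log_div (by positivity) (by positivity)]
  ring

lemma tendsto_comp_div_comp_of_tendsto_mul_rpow {g : ℕ → ℝ} {L θ : ℝ}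
    (hg : Tendsto (fun n => g n * (n : ℝ) ^ θ) atTop (𝓝 L)) (hL : L ≠ 0)
    (ha : Tendsto a l atTop) (hb : Tendsto b l atTop)
    (hab : Tendsto (fun x => (a x : ℝ) / b x) l (𝓝 c)) (hc : c ≠ 0) :
    Tendsto (fun x => g (b x) / g (a x)) l (𝓝 (c ^ θ)) := by
  have key := ((hg.comp hb).div (hg.comp ha) hL).mul (hab.rpow_const (p := θ) (Or.inl hc))
  rw [div_self hL, one_mul] at key
  refine key.congr' ?_
  filter_upwards [ha.eventually_gt_atTop 0, hb.eventually_gt_atTop 0] with x hax hbx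
  have hA : (a x : ℝ) ^ θ ≠ 0 := (rpow_pos_of_pos (by positivity) θ).ne'
  have hB : (b x : ℝ) ^ θ ≠ 0 := (rpow_pos_of_pos (by positivity) θ).ne'
  show (g (b x) * _) / (g (a x) * _) * _ = _
  rw [div_rpow (by positivity) (by positivity), mul_div_mul_comm, mul_assoc,
    div_mul_div_cancel₀ hA, div_self hB, mul_one]

lemma tendsto_sum_range_inv_sub_log :
    Tendsto (fun n : ℕ => ∑ j ∈ range n, (j : ℝ)⁻¹ - log n) atTop
      (𝓝 eulerMascheroniConstant) := by
  rw [← tendsto_add_atTop_iff_nat 1]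
  refine tendsto_harmonic_sub_log_add_one.congr fun n => ?_
  simp [sum_range_succ', harmonic]

noncomputable def factorialDivRising (θ : ℝ) (n : ℕ) : ℝ :=
  (∏ i ∈ Ico 1 n, (i : ℝ)) / ∏ i ∈ range n, (θ + i)

lemma factorialDivRising_mul_rpow {θ : ℝ} (hθ : 0 < θ) {n : ℕ} (hn : 1 ≤ n) :
    factorialDivRising θ n * (n : ℝ) ^ θ = GammaSeq θ n * ((θ + n) / n) := by
  have hfact : (n.factorial : ℝ) = (∏ i ∈ Ico 1 n, (i : ℝ)) * n := by
    rw [← prod_Ico_id_eq_factorial, Nat.cast_prod, prod_Ico_succ_top hn]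
  have hP : 0 < ∏ i ∈ range n, (θ + i) := prod_pos fun i _ => by positivity
  have hn0 : (n : ℝ) ≠ 0 := by positivity
  rw [factorialDivRising, GammaSeq, hfact, prod_range_succ]
  field_simp

lemma tendsto_factorialDivRising_mul_rpow {θ : ℝ} (hθ : 0 < θ) :
    Tendsto (fun n => factorialDivRising θ n * (n : ℝ) ^ θ) atTop (𝓝 (Gamma θ)) := by
  have hratio : Tendsto (fun n : ℕ => (θ + n) / n) atTop (𝓝 1) := by
    refine (zero_add (1 : ℝ) ▸ (tendsto_const_div_atTop_nhds_zero_nat θ).add_const 1).congr' ?_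
    filter_upwards [eventually_gt_atTop 0] with n hn
    field_simp
  refine (mul_one (Gamma θ) ▸ (GammaSeq_tendsto_Gamma θ).mul hratio).congr' ?_
  filter_upwards [eventually_ge_atTop 1] with n hn
  exact (factorialDivRising_mul_rpow hθ hn).symm

end Asymptotics

theorem W_div_prod_eq {θ : ℝ} (hθ : 0 < θ) {N k : ℕ} (hk1 : 1 ≤ k) (hkN : k ≤ N) :
    W ℝ N k θ / ∏ j ∈ range N, (θ + j) =
      θ * (∑ j ∈ range N, (j : ℝ)⁻¹ - ∑ j ∈ range k, (j : ℝ)⁻¹) *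
        (factorialDivRising θ N / factorialDivRising θ k) := by
  have hPk : 0 < ∏ j ∈ range k, (θ + j) := prod_pos fun j _ => by positivity
  have hPkN : 0 < ∏ j ∈ Ico k N, (θ + j) := prod_pos fun j _ => by positivity
  have hfact : 0 < ∏ i ∈ Ico 1 k, (i : ℝ) :=
    prod_pos fun i hi => by have := (mem_Ico.1 hi).1; positivity
  rw [W_eq_mul_sum_inv θ hk1 hkN, ← sum_Ico_eq_sub _ hkN, factorialDivRising,
    factorialDivRising, ← prod_Ico_consecutive _ hk1 hkN, ← prod_range_mul_prod_Ico _ hkN]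
  field_simp

/-- asymptotic success probability in the Ewens model.  For fixed
`θ > 0`, if `k(N)/N → 1/e^{1/θ}`, then the success probability
`W(N,k(N)) / (θ(θ+1)⋯(θ+N−1))` converges to `1/e`, independent of `θ`. -/
theorem ewens_asymptotic_success (θ : ℝ) (hθ : 0 < θ) (k : ℕ → ℕ)
    (hk : Filter.Tendsto (fun N => (k N : ℝ) / (N : ℝ)) Filter.atTop
      (nhds (Real.exp (-(1 / θ))))) :
    Filter.Tendsto
      (fun N => W ℝ N (k N) θ / ∏ j ∈ Finset.range N, (θ + j))
      Filter.atTop (nhds (Real.exp (-1))) := by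
  have hc : Real.exp (-(1 / θ)) ≠ 0 := (Real.exp_pos _).ne'
  have hk_top : Tendsto k atTop atTop := tendsto_atTop_of_tendsto_div hk (Real.exp_pos _) tendsto_id
  have hk_le : ∀ᶠ N in atTop, k N ≤ N := by
    have hc1 : Real.exp (-(1 / θ)) < 1 := Real.exp_lt_one_iff.2 (by simpa using hθ)
    filter_upwards [hk.eventually_lt_const hc1, eventually_gt_atTop 0] with N h hN
    exact_mod_cast ((div_lt_one (by positivity)).1 h).le
  have hH := tendsto_comp_sub_comp_of_tendsto_sub_log tendsto_sum_range_inv_sub_log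
    hk_top tendsto_id hk hc
  have hG := tendsto_comp_div_comp_of_tendsto_mul_rpow (tendsto_factorialDivRising_mul_rpow hθ)
    (Real.Gamma_pos_of_pos hθ).ne' hk_top tendsto_id hk hc
  have hlim : θ * -Real.log (Real.exp (-(1 / θ))) * Real.exp (-(1 / θ)) ^ θ = Real.exp (-1) := by
    rw [Real.log_exp, ← Real.exp_mul]
    field_simp
  rw [← hlim]
  refine ((hH.const_mul θ).mul hG).congr' ?_
  filter_upwards [hk_top.eventually_ge_atTop 1, hk_le] with N h1 h2
  exact (W_div_prod_eq hθ h1 h2).symm
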